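/- arXiv:1210.3146 — 2 statements merged into one kernel-verified Lean document; each statement's English description precedes it below -/
import Mathlib

section
/- Let w be a nonempty finite word. Then every position i of w (1 ≤ i ≤ |w|) introduces at least one complete return factor of w. -/
/-- Number of occurrences of `u` as a factor of `w` (positions are 0-indexed). -/
noncomputable def occCount {A : Type*} (u w : List A) : ℕ :=
  Set.ncard {i : ℕ | i + u.length ≤ w.length ∧ (w.drop i).take u.length = u}

/-- `v` is a complete first return to `u`: `u` is a prefix and a suffix of `v`,
and `u` has exactly two occurrences in `v`. -/
def IsCompleteFirstReturn {A : Type*} (v u : List A) : Prop :=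
  u <+: v ∧ u <:+ v ∧ occCount u v = 2

/-- Privileged words: the empty word and the single letters are privileged, and a word of
length at least 2 is privileged if it is a complete first return to a shorter privileged word. -/
inductive Privileged {A : Type*} : List A → Prop where
  | nil : Privileged ([] : List A)
  | single (a : A) : Privileged [a]
  | ret (w u : List A) : 2 ≤ w.length → u.length < w.length → Privileged u →
      IsCompleteFirstReturn w u → Privileged w

/-- A complete return word: a complete first return to some word
(the empty word counted by convention; letters are complete first returns to the empty word). -/
def IsCompleteReturnWord {A : Type*} (v : List A) : Prop :=
  v = [] ∨ ∃ u : List A, IsCompleteFirstReturn v u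

/-- Position `i` of `w` (1-based, `1 ≤ i ≤ |w|`) introduces the factor `u`:
`u` occurs in `w` ending at position `i` and `u` occurs exactly once in the prefix `w[1,i]`. -/
def Introduces {A : Type*} (w : List A) (i : ℕ) (u : List A) : Prop :=
  1 ≤ i ∧ i ≤ w.length ∧ u <:+ w.take i ∧ occCount u (w.take i) = 1

/-- A finite word is rich if it has exactly `|w| + 1` distinct palindromic factors. -/
noncomputable def RichWord {A : Type*} (w : List A) : Prop :=
  Set.ncard {u : List A | u <:+: w ∧ u.reverse = u} = w.length + 1

/-- `u` is a (finite) factor of the infinite word `w`. -/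
def IsFactorInf {A : Type*} (w : ℕ → A) (u : List A) : Prop :=
  ∃ i : ℕ, u = (List.range u.length).map fun k => w (i + k)

/-- A Q-property of finite words. -/
structure IsQProperty {A : Type*} (Q : List A → Prop) : Prop where
  q_nil : Q []
  q_single : ∀ a : A, Q [a]
  ends_at_every_position : ∀ (w : List A) (i : ℕ), 1 ≤ i → i ≤ w.length →
    ∃ u : List A, u ≠ [] ∧ u <:+ w.take i ∧ Q u
  introduces_at_most_one : ∀ (w : List A) (i : ℕ) (u v : List A),
    Introduces w i u → Introduces w i v → Q u → Q v → u = v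

/-- Q-complexity of an infinite word: the number of distinct factors of length `n`
having property `Q`. -/
noncomputable def qComplexityInf {A : Type*} (w : ℕ → A) (Q : List A → Prop) (n : ℕ) : ℕ :=
  Set.ncard {u : List A | IsFactorInf w u ∧ Q u ∧ u.length = n}

/-- Privileged complexity of an infinite word. -/
noncomputable def privComplexityInf {A : Type*} (w : ℕ → A) (n : ℕ) : ℕ :=
  Set.ncard {u : List A | IsFactorInf w u ∧ Privileged u ∧ u.length = n}

/-- Palindromic complexity of an infinite word. -/
noncomputable def palComplexityInf {A : Type*} (w : ℕ → A) (n : ℕ) : ℕ :=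
  Set.ncard {u : List A | IsFactorInf w u ∧ u.reverse = u ∧ u.length = n}

/-- An infinite word is ultimately periodic if it is of the form `u v v v ⋯`
with `v` nonempty. -/
def UltimatelyPeriodic {A : Type*} (w : ℕ → A) : Prop :=
  ∃ u v : List A, v ≠ [] ∧ ∀ n : ℕ, w n =
    if n < u.length then u.getD n (w 0)
    else v.getD ((n - u.length) % v.length) (w 0)

/-- An infinite word is Sturmian if it has exactly `n + 1` distinct factors of
length `n` for every `n`. -/
def Sturmian {A : Type*} (w : ℕ → A) : Prop :=
  ∀ n : ℕ, Set.ncard {u : List A | IsFactorInf w u ∧ u.length = n} = n + 1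

/-- A finite binary word is balanced: its set of factors is balanced. -/
def BalancedWord (x : List Bool) : Prop :=
  ∀ u v : List Bool, u <:+: x → v <:+: x → u.length = v.length →
    ((u.count true : ℤ) - (v.count true : ℤ)).natAbs ≤ 1

/-- `u` is a right special factor of the infinite word `w`. -/
def RightSpecial {A : Type*} (w : ℕ → A) (u : List A) : Prop :=
  ∃ a b : A, a ≠ b ∧ IsFactorInf w (u ++ [a]) ∧ IsFactorInf w (u ++ [b])

/-- The Thue-Morse word: the `n`-th letter is the parity of the number of ones in the
binary expansion of `n` (`false` = 0, `true` = 1). -/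
def thueMorse (n : ℕ) : Bool := (Nat.digits 2 n).count 1 % 2 == 1


/-! Let `p = w[1,i]`. Shortening `p`, which occurs only once in itself, letter by letter from the
left, one reaches a suffix `a s` of `p` that occurs only once in `p` while `s` occurs at least
twice (if none exists, `p` is empty). The suffix `r` of `p` starting at the next-to-last
occurrence of `s` is then a complete first return to `s`. Being at least as long as `a s`, it has
`a s` as a suffix, so each occurrence of `r` yields one of `a s`, and `r` occurs only once in
`p`. -/

section

variable {A : Type*}

def occPositions (u w : List A) : Set ℕ :=
  {i : ℕ | i + u.length ≤ w.length ∧ (w.drop i).take u.length = u}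

theorem occCount_eq_ncard (u w : List A) : occCount u w = (occPositions u w).ncard := rfl

theorem sub_length_mem_occPositions {u w : List A} (h : u <:+ w) :
    w.length - u.length ∈ occPositions u w := by
  refine ⟨by have := h.length_le; omega, ?_⟩
  rw [← List.suffix_iff_eq_drop.mp h, List.take_length]

theorem mem_occPositions_drop {u w : List A} {t : ℕ} (j : ℕ) (ht : t ≤ w.length) :
    j ∈ occPositions u (w.drop t) ↔ t + j ∈ occPositions u w := by
  simp only [occPositions, Set.mem_ofPred_eq, List.length_drop, List.drop_drop]
  constructor <;> rintro ⟨h1, h2⟩ <;> exact ⟨by omega, h2⟩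

theorem add_sub_length_mem_occPositions {u r w : List A} {j : ℕ} (hj : j ∈ occPositions r w)
    (h : u <:+ r) : j + (r.length - u.length) ∈ occPositions u w := by
  obtain ⟨hjr, hocc⟩ := hj
  have hur := h.length_le
  refine ⟨by omega, ?_⟩
  calc (w.drop (j + (r.length - u.length))).take u.length
      = ((w.drop j).take r.length).drop (r.length - u.length) := by
        rw [List.drop_take, List.drop_drop]; congr 1; omega
    _ = u := by rw [hocc, ← List.suffix_iff_eq_drop.mp h]

theorem occCount_self (w : List A) : occCount w w = 1 := by
  rw [occCount_eq_ncard, Set.ncard_eq_one]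
  refine ⟨0, Set.eq_singleton_iff_unique_mem.mpr ⟨?_, fun j hj => by have := hj.1; omega⟩⟩
  simpa using sub_length_mem_occPositions (List.suffix_refl w)

theorem occCount_eq_one_of_suffix {u r p : List A} (hur : u <:+ r) (hrp : r <:+ p)
    (hu : occCount u p = 1) : occCount r p = 1 := by
  obtain ⟨a, ha⟩ : ∃ a, occPositions u p = {a} := Set.ncard_eq_one.mp hu
  rw [occCount_eq_ncard, Set.ncard_eq_one]
  refine ⟨p.length - r.length, Set.eq_singleton_iff_unique_mem.mpr
    ⟨sub_length_mem_occPositions hrp, fun j hj => ?_⟩⟩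
  have hu_last : p.length - u.length = a := by
    simpa [ha] using sub_length_mem_occPositions (hur.trans hrp)
  have hu_j : j + (r.length - u.length) = a := by
    simpa [ha] using add_sub_length_mem_occPositions hj hur
  have := hj.1
  have := hur.length_le
  omega

theorem exists_mem_lt_maximal {S : Set ℕ} {x n : ℕ} (hx : x ∈ S) (hxn : x < n) :
    ∃ m ∈ S, m < n ∧ ∀ k ∈ S, m < k → n ≤ k := by
  classical
  let P : ℕ → Prop := fun m => m ∈ S ∧ m < n
  obtain ⟨hmS, hmn⟩ : P (Nat.findGreatest P n) := Nat.findGreatest_spec hxn.le ⟨hx, hxn⟩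
  refine ⟨_, hmS, hmn, fun k hk hmk => ?_⟩
  by_contra! hkn
  exact Nat.findGreatest_is_greatest hmk hkn.le ⟨hk, hkn⟩

theorem isCompleteFirstReturn_drop {s p : List A} {j : ℕ} (hs : s <:+ p)
    (hj : j ∈ occPositions s p) (hjlt : j < p.length - s.length)
    (hgap : ∀ k ∈ occPositions s p, j < k → p.length - s.length ≤ k) :
    IsCompleteFirstReturn (p.drop j) s := by
  have hjp : j ≤ p.length := by omega
  have hlast : (p.drop j).drop (p.length - s.length - j) = s := by
    rw [List.drop_drop, Nat.add_sub_cancel' hjlt.le, ← List.suffix_iff_eq_drop.mp hs]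
  refine ⟨List.prefix_iff_eq_take.mpr hj.2.symm, hlast ▸ List.drop_suffix _ _, ?_⟩
  have hocc : occPositions s (p.drop j) = {0, p.length - s.length - j} := by
    ext k
    rw [mem_occPositions_drop k hjp]
    simp only [Set.mem_insert_iff, Set.mem_singleton_iff]
    constructor
    · intro hk
      rcases Nat.eq_zero_or_pos k with rfl | hkpos
      · exact Or.inl rfl
      · have := hgap _ hk (by omega)
        have := hk.1
        right; omega
    · rintro (rfl | rfl)
      · simpa using hj
      · rw [Nat.add_sub_cancel' hjlt.le]; exact sub_length_mem_occPositions hs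
  rw [occCount_eq_ncard, hocc, Set.ncard_pair (by omega)]

theorem exists_suffix_isCompleteFirstReturn {s p : List A} (hs : s <:+ p)
    (hocc : occCount s p ≠ 1) :
    ∃ r, r <:+ p ∧ s.length < r.length ∧ IsCompleteFirstReturn r s := by
  have hlast := sub_length_mem_occPositions hs
  obtain ⟨x, hx, hxne⟩ : ∃ x ∈ occPositions s p, x ≠ p.length - s.length := by
    by_contra! h
    exact hocc (Set.ncard_eq_one.mpr ⟨_, Set.eq_singleton_iff_unique_mem.mpr ⟨hlast, h⟩⟩)
  have := hx.1
  obtain ⟨j, hj, hjlt, hgap⟩ := exists_mem_lt_maximal hx (by omega : x < p.length - s.length)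
  exact ⟨p.drop j, List.drop_suffix j p, by rw [List.length_drop]; omega,
    isCompleteFirstReturn_drop hs hj hjlt hgap⟩

theorem exists_suffix_occCount_eq_one_isCompleteReturnWord {p : List A} :
    ∀ {u : List A}, u <:+ p → occCount u p = 1 →
      ∃ r, r <:+ p ∧ occCount r p = 1 ∧ IsCompleteReturnWord r
  | [], hu, hocc => ⟨[], hu, hocc, Or.inl rfl⟩
  | a :: s, hu, hocc => by
    have hs : s <:+ p := (List.suffix_cons a s).trans hu
    by_cases hsocc : occCount s p = 1
    · exact exists_suffix_occCount_eq_one_isCompleteReturnWord hs hsocc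
    obtain ⟨r, hrp, hlen, hret⟩ := exists_suffix_isCompleteFirstReturn hs hsocc
    have hur : a :: s <:+ r := List.suffix_of_suffix_length_le hu hrp (by simpa using hlen)
    exact ⟨r, hrp, occCount_eq_one_of_suffix hur hrp hocc, Or.inr ⟨s, hret⟩⟩

end

theorem every_position_introduces_complete_return_factor_general {A : Type*} (w : List A)
    (i : ℕ) (hi1 : 1 ≤ i) (hi2 : i ≤ w.length) :
    ∃ u : List A, Introduces w i u ∧ IsCompleteReturnWord u := by
  obtain ⟨r, hr, hocc, hret⟩ := exists_suffix_occCount_eq_one_isCompleteReturnWord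
    (List.suffix_refl (w.take i)) (occCount_self _)
  exact ⟨r, ⟨hi1, hi2, hr, hocc⟩, hret⟩

/-- Every position `i` (with `1 ≤ i ≤ |w|`) of a nonempty finite word `w`
introduces at least one complete return factor of `w`. -/
theorem every_position_introduces_complete_return_factor {A : Type*} (w : List A)
    (hw : w ≠ []) (i : ℕ) (hi1 : 1 ≤ i) (hi2 : i ≤ w.length) :
    ∃ u : List A, Introduces w i u ∧ IsCompleteReturnWord u :=
  every_position_introduces_complete_return_factor_general w i hi1 hi2
end

section
/- Let w be a finite word. If some position of w introduces exactly one complete return factor, then that factor is privileged. Moreover, w has exactly |w|+1 distinct complete return factors if and only if every complete return factor of w is privileged. -/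
/-!
Every nonempty word `p` has exactly one privileged suffix occurring only once in `p`. It exists
because, starting from the last letter, a privileged suffix that occurs twice can be replaced by
the longer complete first return to it that ends `p`, which is again privileged. It is unique
because a privileged proper suffix of a privileged word occurs in it at least twice.

Applied to the prefixes of `w`, this says that every position introduces exactly one privileged
factor, and privileged words are complete return words. Hence the map sending a nonempty complete
return factor to the position introducing it is onto `{1, …, |w|}`, and `w` has `|w| + 1`
complete return factors iff this map is injective, i.e. iff each position introduces only one
complete return factor, which is then the privileged one.
-/

section Occurrences

variable {A : Type*}

def OccursAt (u w : List A) (i : ℕ) : Prop :=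
  i + u.length ≤ w.length ∧ (w.drop i).take u.length = u

open Classical in
noncomputable def occurrences (u w : List A) : Finset ℕ :=
  (Finset.range (w.length + 1)).filter (OccursAt u w)

theorem mem_occurrences {u w : List A} {i : ℕ} : i ∈ occurrences u w ↔ OccursAt u w i := by
  simp only [occurrences, Finset.mem_filter, Finset.mem_range, and_iff_right_iff_imp]
  exact fun h => by have := h.1; omega

theorem occCount_eq_card (u w : List A) : occCount u w = (occurrences u w).card := by
  have h : {i : ℕ | i + u.length ≤ w.length ∧ (w.drop i).take u.length = u}
      = ↑(occurrences u w) := by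
    ext i
    simp [mem_occurrences, OccursAt]
  rw [occCount, h, Set.ncard_coe_finset]

theorem occursAt_zero_of_prefix {u w : List A} (h : u <+: w) : OccursAt u w 0 := by
  obtain ⟨t, rfl⟩ := h
  exact ⟨by simp, by simp⟩

theorem occursAt_of_suffix {u w : List A} (h : u <:+ w) :
    OccursAt u w (w.length - u.length) := by
  obtain ⟨t, rfl⟩ := h
  have hl : (t ++ u).length - u.length = t.length := by simp
  exact ⟨by simp, by rw [hl, List.drop_left, List.take_length]⟩

theorem exists_occursAt_of_infix {u w : List A} (h : u <:+: w) : ∃ i, OccursAt u w i := by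
  obtain ⟨x, y, rfl⟩ := h
  exact ⟨x.length, by simp, by rw [List.append_assoc, List.drop_left, List.take_left]⟩

theorem occursAt_take_iff {u w : List A} {n k : ℕ} :
    OccursAt u (w.take n) k ↔ OccursAt u w k ∧ k + u.length ≤ n := by
  simp only [OccursAt, List.length_take, List.drop_take, List.take_take]
  constructor
  · rintro ⟨h1, h2⟩
    rw [Nat.min_eq_left (by omega)] at h2
    exact ⟨⟨by omega, h2⟩, by omega⟩
  · rintro ⟨⟨h1, h2⟩, h3⟩
    exact ⟨by omega, by rwa [Nat.min_eq_left (by omega)]⟩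

theorem occursAt_drop_iff {u w : List A} {n k : ℕ} (hn : n ≤ w.length) :
    OccursAt u (w.drop n) k ↔ OccursAt u w (n + k) := by
  simp only [OccursAt, List.length_drop, List.drop_drop]
  exact and_congr_left fun _ => by omega

theorem eq_of_occursAt_of_occCount_eq_one {u w : List A} {i j : ℕ} (h : occCount u w = 1)
    (hi : OccursAt u w i) (hj : OccursAt u w j) : i = j := by
  rw [occCount_eq_card] at h
  exact Finset.card_le_one.1 h.le i (mem_occurrences.2 hi) j (mem_occurrences.2 hj)

theorem occCount_nil (w : List A) : occCount ([] : List A) w = w.length + 1 := by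
  have h : occurrences ([] : List A) w = Finset.range (w.length + 1) := by
    ext i
    simp [mem_occurrences, OccursAt]
  rw [occCount_eq_card, h, Finset.card_range]

theorem occCount_pos_of_suffix {u w : List A} (h : u <:+ w) : 0 < occCount u w := by
  rw [occCount_eq_card]
  exact Finset.card_pos.2 ⟨_, mem_occurrences.2 (occursAt_of_suffix h)⟩

theorem occCount_le_of_prefix {v w : List A} (u : List A) (h : v <+: w) :
    occCount u v ≤ occCount u w := by
  rw [List.prefix_iff_eq_take.1 h, occCount_eq_card, occCount_eq_card]
  exact Finset.card_le_card fun k hk =>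
    mem_occurrences.2 (occursAt_take_iff.1 (mem_occurrences.1 hk)).1

open Classical in
theorem occCount_drop (u w : List A) {n : ℕ} (hn : n ≤ w.length) :
    occCount u (w.drop n) = ((occurrences u w).filter (n ≤ ·)).card := by
  have h : (occurrences u (w.drop n)).image (n + ·) = (occurrences u w).filter (n ≤ ·) := by
    ext k
    simp only [Finset.mem_image, Finset.mem_filter, mem_occurrences, occursAt_drop_iff hn]
    constructor
    · rintro ⟨j, hj, rfl⟩
      exact ⟨hj, Nat.le_add_right _ _⟩
    · rintro ⟨hk, hnk⟩
      exact ⟨k - n, by rwa [Nat.add_sub_cancel' hnk], by omega⟩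
  rw [occCount_eq_card, ← h, Finset.card_image_of_injective _ (add_right_injective n)]

theorem occCount_le_of_suffix {v w : List A} (u : List A) (h : v <:+ w) :
    occCount u v ≤ occCount u w := by
  classical
  rw [List.suffix_iff_eq_drop.1 h, occCount_drop u w (by omega), occCount_eq_card]
  exact Finset.card_le_card (Finset.filter_subset _ _)

theorem occCount_add_one_le_of_prefix_of_suffix {u s t : List A} (hu : u <+: t)
    (hs : s <:+ t) (hlt : s.length < t.length) : occCount u s + 1 ≤ occCount u t := by
  classical
  rw [List.suffix_iff_eq_drop.1 hs, occCount_drop u t (by omega), occCount_eq_card]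
  refine Finset.card_lt_card (Finset.filter_ssubset.2 ⟨0, ?_, by omega⟩)
  exact mem_occurrences.2 (occursAt_zero_of_prefix hu)

end Occurrences

section Privileged

variable {A : Type*}

theorem Privileged.isCompleteReturnWord {s : List A} (h : Privileged s) :
    IsCompleteReturnWord s := by
  cases h with
  | nil => exact Or.inl rfl
  | single a => exact Or.inr ⟨[], List.nil_prefix, List.nil_suffix, by rw [occCount_nil]; rfl⟩
  | ret w u _ _ _ hret => exact Or.inr ⟨u, hret⟩

/-- The suffix of `p` starting at the second-to-last occurrence of `s`. -/
theorem exists_completeFirstReturn_suffix {s p : List A} (hs : s <:+ p)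
    (h2 : 2 ≤ occCount s p) :
    ∃ v, v <:+ p ∧ s.length < v.length ∧ IsCompleteFirstReturn v s := by
  classical
  set last := p.length - s.length
  have hlast : last ∈ occurrences s p := mem_occurrences.2 (occursAt_of_suffix hs)
  have hne : ((occurrences s p).erase last).Nonempty := by
    rw [← Finset.card_pos, Finset.card_erase_of_mem hlast, ← occCount_eq_card]
    omega
  set j := ((occurrences s p).erase last).max' hne
  obtain ⟨hjlast, hj⟩ := Finset.mem_erase.1 (Finset.max'_mem _ hne)
  have hjocc : OccursAt s p j := mem_occurrences.1 hj
  have hjlt : j < last := by have := hjocc.1; omega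
  have hbetween : (occurrences s p).filter (j ≤ ·) = {j, last} := by
    ext k
    simp only [Finset.mem_filter, Finset.mem_insert, Finset.mem_singleton]
    constructor
    · rintro ⟨hk, hjk⟩
      by_cases hkl : k = last
      · exact Or.inr hkl
      · exact Or.inl (le_antisymm (Finset.le_max' _ k (Finset.mem_erase.2 ⟨hkl, hk⟩)) hjk)
    · rintro (rfl | rfl)
      · exact ⟨hj, le_rfl⟩
      · exact ⟨hlast, hjlt.le⟩
  refine ⟨p.drop j, List.drop_suffix j p, by rw [List.length_drop]; omega,
    List.prefix_iff_eq_take.2 hjocc.2.symm,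
    List.suffix_of_suffix_length_le hs (List.drop_suffix j p) (by rw [List.length_drop]; omega),
    ?_⟩
  rw [occCount_drop s p (by omega), hbetween, Finset.card_pair hjlt.ne]

theorem exists_privileged_suffix_occCount_eq_one_of_privileged_suffix {s p : List A}
    (hne : s ≠ []) (hs : Privileged s) (hsp : s <:+ p) :
    ∃ t, Privileged t ∧ t <:+ p ∧ occCount t p = 1 := by
  by_cases h1 : occCount s p = 1
  · exact ⟨s, hs, hsp, h1⟩
  have h2 : 2 ≤ occCount s p := by have := occCount_pos_of_suffix hsp; omega
  obtain ⟨v, hvp, hlt, hret⟩ := exists_completeFirstReturn_suffix hsp h2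
  have hslen : 0 < s.length := List.length_pos_iff.2 hne
  have hvp' := hvp.length_le
  exact exists_privileged_suffix_occCount_eq_one_of_privileged_suffix
    (List.ne_nil_of_length_pos (by omega)) (Privileged.ret v s (by omega) hlt hs hret) hvp
termination_by p.length - s.length

theorem exists_privileged_suffix_occCount_eq_one {p : List A} (hp : p ≠ []) :
    ∃ t, Privileged t ∧ t <:+ p ∧ occCount t p = 1 := by
  obtain ⟨q, a, rfl⟩ := (List.eq_nil_or_concat p).resolve_left hp
  exact exists_privileged_suffix_occCount_eq_one_of_privileged_suffix (List.cons_ne_nil a [])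
    (Privileged.single a) ⟨q, List.concat_eq_append.symm⟩

theorem Privileged.two_le_occCount_of_suffix {s t : List A} (hs : Privileged s)
    (ht : Privileged t) (hst : s <:+ t) (hlt : s.length < t.length) : 2 ≤ occCount s t := by
  cases ht with
  | nil => simp at hlt
  | single a =>
    obtain rfl : s = [] := List.length_eq_zero_iff.1 (by simpa using hlt)
    simp [occCount_nil]
  | ret t u _ _ hu hret =>
    obtain ⟨hupre, husuf, hocc⟩ := hret
    rcases lt_trichotomy s.length u.length with hsu | hsu | hus
    · have hsu' : s <:+ u := List.suffix_of_suffix_length_le hst husuf hsu.le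
      exact (hs.two_le_occCount_of_suffix hu hsu' hsu).trans (occCount_le_of_prefix s hupre)
    · obtain rfl := (List.suffix_of_suffix_length_le hst husuf hsu.le).eq_of_length hsu
      exact hocc.ge
    · -- `u` would occur at the start of `t` and twice inside the proper suffix `s`.
      have hus' : u <:+ s := List.suffix_of_suffix_length_le husuf hst hus.le
      have := hu.two_le_occCount_of_suffix hs hus' hus
      have := occCount_add_one_le_of_prefix_of_suffix hupre hst hlt
      omega
termination_by t.length

theorem Privileged.eq_of_suffix_of_occCount_eq_one {s t p : List A} (hs : Privileged s)
    (ht : Privileged t) (hsp : s <:+ p) (htp : t <:+ p) (hs1 : occCount s p = 1)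
    (ht1 : occCount t p = 1) : s = t := by
  wlog hle : s.length ≤ t.length generalizing s t
  · exact (this ht hs htp hsp ht1 hs1 (by omega)).symm
  have hst : s <:+ t := List.suffix_of_suffix_length_le hsp htp hle
  refine hst.eq_of_length (le_antisymm hle (not_lt.1 fun hlt => ?_))
  have := hs.two_le_occCount_of_suffix ht hst hlt
  have := occCount_le_of_suffix s htp
  omega

end Privileged

section Introduces

variable {A : Type*} {w u v : List A} {i : ℕ}

theorem Introduces.ne_nil (h : Introduces w i u) : u ≠ [] := by
  rintro rfl
  have hcount := h.2.2.2
  rw [occCount_nil, List.length_take, Nat.min_eq_left h.2.1] at hcount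
  exact absurd h.1 (by omega)

theorem Introduces.infix (h : Introduces w i u) : u <:+: w :=
  h.2.2.1.isInfix.trans (List.take_prefix i w).isInfix

theorem Introduces.length_le (h : Introduces w i u) : u.length ≤ i := by
  have hlen := h.2.2.1.length_le
  rwa [List.length_take, Nat.min_eq_left h.2.1] at hlen

theorem Introduces.occursAt (h : Introduces w i u) : OccursAt u w (i - u.length) := by
  have hocc := occursAt_of_suffix h.2.2.1
  rw [List.length_take, Nat.min_eq_left h.2.1] at hocc
  exact (occursAt_take_iff.1 hocc).1

theorem Introduces.pos_eq {i' : ℕ} (h : Introduces w i u) (h' : Introduces w i' u) : i = i' := by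
  wlog hle : i ≤ i' generalizing i i'
  · exact (this h' h (by omega)).symm
  have := h.length_le
  have := h'.length_le
  have hfirst : OccursAt u (w.take i') (i - u.length) :=
    occursAt_take_iff.2 ⟨h.occursAt, by omega⟩
  have hlast : OccursAt u (w.take i') (i' - u.length) :=
    occursAt_take_iff.2 ⟨h'.occursAt, by omega⟩
  have := eq_of_occursAt_of_occCount_eq_one h'.2.2.2 hfirst hlast
  omega

theorem exists_introduces_of_infix (hne : u ≠ []) (hu : u <:+: w) : ∃ i, Introduces w i u := by
  classical
  have hex := exists_occursAt_of_infix hu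
  set j := Nat.find hex
  have hj : OccursAt u w j := Nat.find_spec hex
  have hulen : 0 < u.length := List.length_pos_iff.2 hne
  have hsingle : occurrences u (w.take (j + u.length)) = {j} := by
    ext k
    simp only [mem_occurrences, Finset.mem_singleton, occursAt_take_iff]
    constructor
    · rintro ⟨hk, hkj⟩
      have := Nat.find_min' hex hk
      omega
    · rintro rfl
      exact ⟨hj, le_rfl⟩
  refine ⟨j + u.length, by omega, hj.1, ⟨w.take j, by rw [List.take_add, hj.2]⟩, ?_⟩
  rw [occCount_eq_card, hsingle, Finset.card_singleton]

theorem exists_privileged_introduces (h1 : 1 ≤ i) (h2 : i ≤ w.length) :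
    ∃ s, Privileged s ∧ Introduces w i s := by
  have hne : w.take i ≠ [] := List.length_pos_iff.1 (by rw [List.length_take]; omega)
  obtain ⟨s, hs, hsuf, hocc⟩ := exists_privileged_suffix_occCount_eq_one hne
  exact ⟨s, hs, h1, h2, hsuf, hocc⟩

theorem Introduces.eq_of_privileged (hu : Introduces w i u) (hv : Introduces w i v)
    (hpu : Privileged u) (hpv : Privileged v) : u = v :=
  hpu.eq_of_suffix_of_occCount_eq_one hpv hu.2.2.1 hv.2.2.1 hu.2.2.2 hv.2.2.2

theorem Introduces.privileged_of_forall_eq (hu : Introduces w i u)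
    (huniq : ∀ v, Introduces w i v → IsCompleteReturnWord v → v = u) : Privileged u := by
  obtain ⟨s, hs, hsi⟩ := exists_privileged_introduces (w := w) hu.1 hu.2.1
  exact huniq s hsi hs.isCompleteReturnWord ▸ hs

end Introduces

section Counting

variable {A : Type*}

def completeReturnFactors (w : List A) : Set (List A) :=
  {u | u <:+: w ∧ IsCompleteReturnWord u}

theorem completeReturnFactors_finite (w : List A) : (completeReturnFactors w).Finite :=
  (List.finite_toSet w.sublists).subset fun u hu => by simpa using hu.1.sublist

noncomputable def introPos (w u : List A) : ℕ :=
  sInf {i | Introduces w i u}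

theorem Introduces.introPos_eq {w u : List A} {i : ℕ} (h : Introduces w i u) :
    introPos w u = i := by
  have hpos : {i' | Introduces w i' u} = {i} :=
    Set.eq_singleton_iff_unique_mem.2 ⟨h, fun _ h' => h'.pos_eq h⟩
  rw [introPos, hpos, csInf_singleton]

theorem introduces_introPos {w u : List A} (hne : u ≠ []) (hu : u <:+: w) :
    Introduces w (introPos w u) u := by
  obtain ⟨i, hi⟩ := exists_introduces_of_infix hne hu
  rwa [hi.introPos_eq]

theorem introPos_image_completeReturnFactors (w : List A) :
    introPos w '' (completeReturnFactors w \ {[]}) = Set.Icc 1 w.length := by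
  ext i
  constructor
  · rintro ⟨u, ⟨⟨hu, -⟩, hne⟩, rfl⟩
    have h := introduces_introPos hne hu
    exact ⟨h.1, h.2.1⟩
  · rintro ⟨h1, h2⟩
    obtain ⟨s, hs, hsi⟩ := exists_privileged_introduces (w := w) h1 h2
    exact ⟨s, ⟨⟨hsi.infix, hs.isCompleteReturnWord⟩, hsi.ne_nil⟩, hsi.introPos_eq⟩

theorem ncard_completeReturnFactors_eq_iff_injOn (w : List A) :
    (completeReturnFactors w).ncard = w.length + 1 ↔
      Set.InjOn (introPos w) (completeReturnFactors w \ {[]}) := by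
  have hnil : [] ∈ completeReturnFactors w := ⟨List.nil_infix, Or.inl rfl⟩
  have hfin := completeReturnFactors_finite w
  rw [← Set.ncard_image_iff hfin.sdiff, introPos_image_completeReturnFactors, Set.ncard_Icc_nat,
    ← Set.ncard_sdiff_singleton_add_one hnil hfin]
  omega

theorem injOn_introPos_iff_forall_privileged (w : List A) :
    Set.InjOn (introPos w) (completeReturnFactors w \ {[]}) ↔
      ∀ u, u <:+: w → IsCompleteReturnWord u → Privileged u := by
  constructor
  · intro hinj u hu hcr
    rcases eq_or_ne u [] with rfl | hne
    · exact Privileged.nil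
    have hintro := introduces_introPos hne hu
    refine hintro.privileged_of_forall_eq fun v hv hvcr => hinj ?_ ?_ ?_
    · exact ⟨⟨hv.infix, hvcr⟩, hv.ne_nil⟩
    · exact ⟨⟨hu, hcr⟩, hne⟩
    · rw [hv.introPos_eq]
  · rintro hpriv u ⟨⟨hu, hucr⟩, hune⟩ v ⟨⟨hv, hvcr⟩, hvne⟩ heq
    have hintro := introduces_introPos hune hu
    rw [heq] at hintro
    exact hintro.eq_of_privileged (introduces_introPos hvne hv) (hpriv u hu hucr)
      (hpriv v hv hvcr)

end Counting

/-- If some position of `w` introduces exactly one complete return factor,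
then that factor is privileged.  Moreover, `w` has exactly `|w| + 1` distinct complete
return factors if and only if every complete return factor of `w` is privileged. -/
theorem unique_introduced_return_is_privileged_and_count_iff {A : Type*} (w : List A) :
    (∀ (i : ℕ) (u : List A), Introduces w i u → IsCompleteReturnWord u →
      (∀ v : List A, Introduces w i v → IsCompleteReturnWord v → v = u) →
      Privileged u) ∧
    (Set.ncard {u : List A | u <:+: w ∧ IsCompleteReturnWord u} = w.length + 1 ↔
      ∀ u : List A, u <:+: w → IsCompleteReturnWord u → Privileged u) :=
  ⟨fun _ _ hu _ huniq => hu.privileged_of_forall_eq huniq,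
    (ncard_completeReturnFactors_eq_iff_injOn w).trans (injOn_introPos_iff_forall_privileged w)⟩
end
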